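/- Assume: (A1) σ : ℝ×[0,T] → ℝ is bounded, bounded away from zero and Lipschitz continuous; (A4') there exist a bounded classical solution w of D_t w + (σ²(x,t)/2)·D_x² w + 1 = 0 on (0,+∞)×[0,T) with w = 0 on the parabolic boundary, and L>0 with |w(x,t) − w(x̄,t)| ≤ L|x−x̄| for all x,x̄ ≥ 0, t ∈ [0,T]. Then there exists a constant M>0 such that for all κ>1 and for all functions f : ℝ×[0,T] → ℝ that are bounded and Hölder continuous on compact subsets, every bounded classical solution u_f ∈ C^{2,1}((0,+∞)×[0,T)) ∩ C([0,+∞)×[0,T]) of D_t u + (σ²(x,t)/2)·D_x² u + f(x,t) = 0 on (0,+∞)×[0,T) with u = 0 on the parabolic boundary has bounded D_x u_f and satisfies ‖u_f‖_κ ≤ (M/κ^{1/3})·‖f‖_κ^{0,ℝ}. -/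

import Mathlib

open Set

/-- Partial derivative in the space variable `x`. -/
noncomputable def Dx (u : ℝ → ℝ → ℝ) (x t : ℝ) : ℝ := deriv (fun y => u y t) x

/-- Second partial derivative in the space variable `x`. -/
noncomputable def Dxx (u : ℝ → ℝ → ℝ) (x t : ℝ) : ℝ := deriv (fun y => Dx u y t) x

/-- Partial derivative in the time variable `t`. -/
noncomputable def Dt (u : ℝ → ℝ → ℝ) (x t : ℝ) : ℝ := deriv (fun s => u x s) t

/-- The parabolic boundary ∂ₚ((0,∞)×[0,T)) = ([0,∞)×{T}) ∪ ({0}×[0,T]). -/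
def parabBdry (T : ℝ) : Set (ℝ × ℝ) := (Ici 0 ×ˢ {T}) ∪ ({0} ×ˢ Icc 0 T)

/-- `u ∈ C^{2,1}((0,∞)×[0,T)) ∩ C([0,∞)×[0,T])`: continuity on the closed domain, and
existence plus continuity of `D_x u`, `D_x² u`, `D_t u` on `(0,∞)×[0,T)`. -/
def RegC21 (T : ℝ) (u : ℝ → ℝ → ℝ) : Prop :=
  ContinuousOn (fun p : ℝ × ℝ => u p.1 p.2) (Ici 0 ×ˢ Icc 0 T) ∧
  (∀ x ∈ Ioi (0:ℝ), ∀ t ∈ Ico (0:ℝ) T,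
    DifferentiableAt ℝ (fun y => u y t) x ∧
    DifferentiableAt ℝ (fun y => Dx u y t) x ∧
    DifferentiableAt ℝ (fun s => u x s) t) ∧
  ContinuousOn (fun p : ℝ × ℝ => Dx u p.1 p.2) (Ioi 0 ×ˢ Ico 0 T) ∧
  ContinuousOn (fun p : ℝ × ℝ => Dxx u p.1 p.2) (Ioi 0 ×ˢ Ico 0 T) ∧
  ContinuousOn (fun p : ℝ × ℝ => Dt u p.1 p.2) (Ioi 0 ×ˢ Ico 0 T)

/-- (A1): `σ` is bounded, bounded away from zero and Lipschitz continuous on `ℝ×[0,T]`. -/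
def CondA1 (T : ℝ) (σ : ℝ → ℝ → ℝ) : Prop :=
  (∃ C, ∀ x : ℝ, ∀ t ∈ Icc (0:ℝ) T, |σ x t| ≤ C) ∧
  (∃ m > 0, ∀ x : ℝ, ∀ t ∈ Icc (0:ℝ) T, m ≤ |σ x t|) ∧
  (∃ L > 0, ∀ x x' : ℝ, ∀ t ∈ Icc (0:ℝ) T, ∀ t' ∈ Icc (0:ℝ) T,
    |σ x t - σ x' t'| ≤ L * (|x - x'| + |t - t'|))

/-- (A2): `β` is bounded and Lipschitz continuous on the parabolic boundary. -/
def CondA2 (T : ℝ) (β : ℝ → ℝ → ℝ) : Prop :=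
  (∃ C, ∀ p ∈ parabBdry T, |β p.1 p.2| ≤ C) ∧
  (∃ L > 0, ∀ p ∈ parabBdry T, ∀ q ∈ parabBdry T,
    |β p.1 p.2 - β q.1 q.2| ≤ L * (|p.1 - q.1| + |p.2 - q.2|))

/-- (A3): `H` is Lipschitz continuous on compact subsets of `ℝ³×[0,T]`, has linear growth
in `(p,u)` and is uniformly Lipschitz in `(p,u)`. -/
def CondA3 (T : ℝ) (H : ℝ → ℝ → ℝ → ℝ → ℝ) : Prop :=
  (∀ U : Set (ℝ × ℝ × ℝ × ℝ), IsCompact U → (∀ q ∈ U, q.2.2.2 ∈ Icc (0:ℝ) T) →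
    ∃ L > 0, ∀ q ∈ U, ∀ q' ∈ U,
      |H q.1 q.2.1 q.2.2.1 q.2.2.2 - H q'.1 q'.2.1 q'.2.2.1 q'.2.2.2| ≤
        L * (|q.1 - q'.1| + |q.2.1 - q'.2.1| + |q.2.2.1 - q'.2.2.1| + |q.2.2.2 - q'.2.2.2|)) ∧
  (∃ K > 0,
    (∀ p u x : ℝ, ∀ t ∈ Icc (0:ℝ) T, |H p u x t| ≤ K * (1 + |u| + |p|)) ∧
    (∀ p p' u u' x : ℝ, ∀ t ∈ Icc (0:ℝ) T,
      |H p u x t - H p' u' x t| ≤ K * (|u - u'| + |p - p'|)))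

/-- (A4'): there is a bounded classical solution `w` of
`D_t w + (σ²/2)·D_x² w + 1 = 0` on `(0,∞)×[0,T)` vanishing on the parabolic boundary,
which is Lipschitz continuous in `x` uniformly in `t`. -/
def CondA4' (T : ℝ) (σ : ℝ → ℝ → ℝ) : Prop :=
  ∃ w : ℝ → ℝ → ℝ,
    RegC21 T w ∧
    (∃ C, ∀ x ∈ Ici (0:ℝ), ∀ t ∈ Icc (0:ℝ) T, |w x t| ≤ C) ∧
    (∀ x ∈ Ioi (0:ℝ), ∀ t ∈ Ico (0:ℝ) T,
      Dt w x t + σ x t ^ 2 / 2 * Dxx w x t + 1 = 0) ∧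
    (∀ p ∈ parabBdry T, w p.1 p.2 = 0) ∧
    (∃ L > 0, ∀ x ∈ Ici (0:ℝ), ∀ x' ∈ Ici (0:ℝ), ∀ t ∈ Icc (0:ℝ) T,
      |w x t - w x' t| ≤ L * |x - x'|)


/-- Hölder continuity on compact subsets of a set `O ⊆ ℝ²`. -/
def HolderOnCompacts (O : Set (ℝ × ℝ)) (f : ℝ → ℝ → ℝ) : Prop :=
  ∀ U ⊆ O, IsCompact U → ∃ L > 0, ∃ l ∈ Ioc (0:ℝ) 1,
    ∀ p ∈ U, ∀ q ∈ U, |f p.1 p.2 - f q.1 q.2| ≤ L * ‖p - q‖ ^ l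

/-!
Multiplying by the weight `e^{-κ(T-t)}` turns the problem into `∂ₜv + a ∂ₓ²v - κ v + g = 0`
with `|g| ≤ N`, `a = σ²/2 ∈ [α, A]` and `v = 0` on the parabolic boundary, so both estimates
become maximum-principle bounds for `v`.

The function `(N/κ)(1 - e^{-λx})` with `αλ² ≥ κ` is a supersolution vanishing at `x = 0`;
comparison gives `|v| ≤ N/κ` and `|v(x,t)| ≤ (Nλ/κ) x`. For the gradient we double the space
variable: with the concave profile `φ(r) = r - r²/(2δ)`, `v(x,t) - v(y,t) - K φ(x - y)` has no
positive maximum on `{0 ≤ y ≤ x ≤ y + δ}` once `K ≳ Nδ/α + N/(κδ) + Nλ/κ`. In the interior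
`∂ₓ²v(x) ≤ -K/δ` and `∂ₓ²v(y) ≥ K/δ`, which the equation forbids as `αK/δ ≥ N`; on the
boundary the bounds on `v` apply. Hence `|∂ₓv| ≤ K`, and `δ = κ^{-1/2}` makes
`K = O(N/√κ) = O(N/κ^{1/3})`.
-/

open Filter Topology

theorem HasDerivAt.nonpos_of_isMaxOn_Icc {g : ℝ → ℝ} {d a b : ℝ} (hg : HasDerivAt g d a)
    (hab : a < b) (hmax : IsMaxOn g (Icc a b) a) : d ≤ 0 := by
  have h := hmax.localize.hasFDerivWithinAt_nonpos hg.hasFDerivAt.hasFDerivWithinAt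
    (sub_mem_posTangentConeAt_of_segment_subset (segment_eq_Icc hab.le).subset)
  simp only [ContinuousLinearMap.toSpanSingleton_apply, smul_eq_mul] at h
  exact nonpos_of_mul_nonpos_right h (sub_pos.2 hab)

theorem IsLocalMax.nonpos_of_hasDerivAt_deriv {h h' : ℝ → ℝ} {x₀ d : ℝ}
    (hmax : IsLocalMax h x₀) (hh : ∀ᶠ y in 𝓝 x₀, HasDerivAt h (h' y) y)
    (hh' : HasDerivAt h' d x₀) : d ≤ 0 := by
  by_contra! hd
  have hderiv : HasDerivAt (deriv h) d x₀ :=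
    hh'.congr_of_eventuallyEq (hh.mono fun y hy => hy.deriv)
  have hmin : IsLocalMin h x₀ :=
    isLocalMin_of_deriv_deriv_pos (hderiv.deriv ▸ hd) hmax.deriv_eq_zero
      hh.self_of_nhds.continuousAt
  have hconst : deriv h =ᶠ[𝓝 x₀] fun _ => 0 := by
    have : h =ᶠ[𝓝 x₀] fun _ => h x₀ := (hmin.and hmax).mono fun y hy => le_antisymm hy.2 hy.1
    filter_upwards [this.eventuallyEq_nhds] with y hy
    rw [hy.deriv_eq, deriv_const]
  exact hd.ne' (hderiv.unique ((hasDerivAt_const x₀ (0:ℝ)).congr_of_eventuallyEq hconst))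

theorem nonpos_of_forall_pos_le_mul {a c : ℝ} (h : ∀ ε > 0, a ≤ ε * c) : a ≤ 0 := by
  have hlim : Tendsto (fun ε => ε * c) (𝓝[>] 0) (𝓝 0) :=
    tendsto_nhdsWithin_of_tendsto_nhds (by simpa using (continuous_mul_const c).tendsto 0)
  exact ge_of_tendsto hlim (eventually_nhdsWithin_of_forall h)

theorem exists_ge_lt_mul_one_add_sq (x C : ℝ) {ε : ℝ} (hε : 0 < ε) :
    ∃ R ≥ x, C < ε * (1 + R ^ 2) :=
  ((eventually_ge_atTop x).and
    ((tendsto_atTop_add_const_left _ 1 (tendsto_pow_atTop two_ne_zero)).const_mul_atTop hε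
      |>.eventually_gt_atTop C)).exists

theorem abs_deriv_le_of_abs_sub_le {f : ℝ → ℝ} {K δ x : ℝ} (hδ : 0 < δ) (hx : 0 < x)
    (h : ∀ y ≥ 0, ∀ z ∈ Icc y (y + δ), |f z - f y| ≤ K * (z - y)) : |deriv f x| ≤ K := by
  obtain ⟨r, hr, hrx, hrδ⟩ : ∃ r > 0, r ≤ x / 2 ∧ r ≤ δ / 2 :=
    ⟨min x δ / 2, by positivity, by linarith [min_le_left x δ], by linarith [min_le_right x δ]⟩
  have hlip : LipschitzOnWith (Real.toNNReal K) f (Ioo (x - r) (x + r)) := by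
    refine LipschitzOnWith.of_dist_le' fun y hy z hz => ?_
    rw [Real.dist_eq, Real.dist_eq]
    rcases le_total z y with hzy | hyz
    · rw [abs_of_nonneg (sub_nonneg.2 hzy)]
      exact h z (by linarith [hz.1]) y ⟨hzy, by linarith [hy.2, hz.1]⟩
    · rw [abs_sub_comm (f y), abs_sub_comm y, abs_of_nonneg (sub_nonneg.2 hyz)]
      exact h y (by linarith [hy.1]) z ⟨hyz, by linarith [hz.2, hy.1]⟩
  have hK : 0 ≤ K := by
    have := h x hx.le (x + δ) ⟨by linarith, le_rfl⟩
    nlinarith [abs_nonneg (f (x + δ) - f x)]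
  simpa [Real.coe_toNNReal K hK] using
    norm_deriv_le_of_lipschitzOn (Ioo_mem_nhds (by linarith) (by linarith)) hlip

theorem exp_neg_mul_sub_le_one {κ T t : ℝ} (hκ : 0 ≤ κ) (ht : t ≤ T) :
    Real.exp (-κ * (T - t)) ≤ 1 :=
  Real.exp_le_one_iff.2 (by nlinarith)

theorem le_exp_mul_of_exp_neg_mul_le {κ T t b K : ℝ} (hκ : 0 ≤ κ) (ht : 0 ≤ t) (hK : 0 ≤ K)
    (h : Real.exp (-κ * (T - t)) * b ≤ K) : b ≤ Real.exp (κ * T) * K := calc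
  b = Real.exp (κ * (T - t)) * (Real.exp (-κ * (T - t)) * b) := by
    rw [← mul_assoc, ← Real.exp_add]
    ring_nf
    simp
  _ ≤ Real.exp (κ * (T - t)) * K := mul_le_mul_of_nonneg_left h (Real.exp_pos _).le
  _ ≤ Real.exp (κ * T) * K := mul_le_mul_of_nonneg_right (Real.exp_le_exp.2 (by nlinarith)) hK

theorem div_add_mul_div_sqrt_le {κ N c : ℝ} (hκ : 1 ≤ κ) (hN : 0 ≤ N) (hc : 0 ≤ c) :
    N / κ + c * N / √κ ≤ (1 + c) / κ ^ ((1:ℝ) / 3) * N := by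
  have hsqrt : √κ ≤ κ := (Real.sqrt_le_left (by linarith)).2 (by nlinarith)
  have hroot : κ ^ ((1:ℝ) / 3) ≤ √κ := by
    rw [Real.sqrt_eq_rpow]
    exact Real.rpow_le_rpow_of_exponent_le hκ (by norm_num)
  calc N / κ + c * N / √κ ≤ N / √κ + c * N / √κ := by gcongr
    _ = (1 + c) * N / √κ := by ring
    _ ≤ (1 + c) / κ ^ ((1:ℝ) / 3) * N := by
      rw [div_mul_eq_mul_div]
      gcongr

structure IsClassical (T : ℝ) (v : ℝ → ℝ → ℝ) : Prop where
  continuousOn : ContinuousOn (fun p : ℝ × ℝ => v p.1 p.2) (Ici 0 ×ˢ Icc 0 T)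
  differentiableAt_x : ∀ x > 0, ∀ t ∈ Ico 0 T, DifferentiableAt ℝ (fun y => v y t) x
  differentiableAt_Dx : ∀ x > 0, ∀ t ∈ Ico 0 T, DifferentiableAt ℝ (fun y => Dx v y t) x
  differentiableAt_t : ∀ x > 0, ∀ t ∈ Ico 0 T, DifferentiableAt ℝ (fun s => v x s) t

theorem RegC21.isClassical {T : ℝ} {u : ℝ → ℝ → ℝ} (hu : RegC21 T u) : IsClassical T u where
  continuousOn := hu.1
  differentiableAt_x x hx t ht := (hu.2.1 x hx t ht).1
  differentiableAt_Dx x hx t ht := (hu.2.1 x hx t ht).2.1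
  differentiableAt_t x hx t ht := (hu.2.1 x hx t ht).2.2

theorem Dx_neg (v : ℝ → ℝ → ℝ) : Dx (fun x t => -v x t) = fun x t => -Dx v x t := by
  funext x t
  exact deriv.neg

theorem Dxx_neg (v : ℝ → ℝ → ℝ) : Dxx (fun x t => -v x t) = fun x t => -Dxx v x t := by
  funext x t
  simp only [Dxx, Dx_neg]
  exact deriv.neg

theorem Dt_neg (v : ℝ → ℝ → ℝ) : Dt (fun x t => -v x t) = fun x t => -Dt v x t := by
  funext x t
  exact deriv.neg

theorem Dx_mul_time (c : ℝ → ℝ) (v : ℝ → ℝ → ℝ) :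
    Dx (fun x t => c t * v x t) = fun x t => c t * Dx v x t := by
  funext x t
  exact deriv_const_mul_field _

theorem Dxx_mul_time (c : ℝ → ℝ) (v : ℝ → ℝ → ℝ) :
    Dxx (fun x t => c t * v x t) = fun x t => c t * Dxx v x t := by
  funext x t
  simp only [Dxx, Dx_mul_time]
  exact deriv_const_mul_field _

namespace IsClassical

variable {T : ℝ} {v : ℝ → ℝ → ℝ}

theorem hasDerivAt_x (hv : IsClassical T v) {x t : ℝ} (hx : 0 < x) (ht : t ∈ Ico 0 T) :
    HasDerivAt (fun y => v y t) (Dx v x t) x :=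
  (hv.differentiableAt_x x hx t ht).hasDerivAt

theorem hasDerivAt_Dx (hv : IsClassical T v) {x t : ℝ} (hx : 0 < x) (ht : t ∈ Ico 0 T) :
    HasDerivAt (fun y => Dx v y t) (Dxx v x t) x :=
  (hv.differentiableAt_Dx x hx t ht).hasDerivAt

theorem hasDerivAt_t (hv : IsClassical T v) {x t : ℝ} (hx : 0 < x) (ht : t ∈ Ico 0 T) :
    HasDerivAt (fun s => v x s) (Dt v x t) t :=
  (hv.differentiableAt_t x hx t ht).hasDerivAt

theorem neg (hv : IsClassical T v) : IsClassical T fun x t => -v x t where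
  continuousOn := hv.continuousOn.neg
  differentiableAt_x x hx t ht := (hv.differentiableAt_x x hx t ht).neg
  differentiableAt_Dx x hx t ht := by
    rw [Dx_neg]
    exact (hv.differentiableAt_Dx x hx t ht).neg
  differentiableAt_t x hx t ht := (hv.differentiableAt_t x hx t ht).neg

theorem mul_time {c : ℝ → ℝ} (hc : Differentiable ℝ c) (hv : IsClassical T v) :
    IsClassical T fun x t => c t * v x t where
  continuousOn := (hc.continuous.comp continuous_snd).continuousOn.mul hv.continuousOn
  differentiableAt_x x hx t ht := (hv.differentiableAt_x x hx t ht).const_mul _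
  differentiableAt_Dx x hx t ht := by
    rw [Dx_mul_time]
    exact (hv.differentiableAt_Dx x hx t ht).const_mul _
  differentiableAt_t x hx t ht := (hc t).mul (hv.differentiableAt_t x hx t ht)

end IsClassical

structure IsDirichletSolution (T κ : ℝ) (a g v : ℝ → ℝ → ℝ) : Prop extends IsClassical T v where
  pde : ∀ x > 0, ∀ t ∈ Ico 0 T, Dt v x t + a x t * Dxx v x t - κ * v x t + g x t = 0
  lateral : ∀ t ∈ Icc 0 T, v 0 t = 0
  terminal : ∀ x ≥ 0, v x T = 0

theorem IsDirichletSolution.neg {T κ : ℝ} {a g v : ℝ → ℝ → ℝ} (hv : IsDirichletSolution T κ a g v) :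
    IsDirichletSolution T κ a (fun x t => -g x t) (fun x t => -v x t) where
  toIsClassical := hv.toIsClassical.neg
  pde x hx t ht := by
    rw [Dt_neg, Dxx_neg]
    linear_combination -hv.pde x hx t ht
  lateral t ht := by simp [hv.lateral t ht]
  terminal x hx := by simp [hv.terminal x hx]

theorem RegC21.isDirichletSolution_weighted {T κ : ℝ} {a f u : ℝ → ℝ → ℝ} (hu : RegC21 T u)
    (hpde : ∀ x ∈ Ioi (0:ℝ), ∀ t ∈ Ico (0:ℝ) T, Dt u x t + a x t * Dxx u x t + f x t = 0)
    (hbdry : ∀ p ∈ parabBdry T, u p.1 p.2 = 0) :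
    IsDirichletSolution T κ a (fun x t => Real.exp (-κ * (T - t)) * f x t)
      (fun x t => Real.exp (-κ * (T - t)) * u x t) where
  toIsClassical := hu.isClassical.mul_time (by fun_prop)
  pde x hx t ht := by
    have hw : HasDerivAt (fun s => Real.exp (-κ * (T - s))) (Real.exp (-κ * (T - t)) * κ) t :=
      (((hasDerivAt_id' t).const_sub T).const_mul (-κ)).exp.congr_deriv (by ring)
    rw [Dxx_mul_time, Dt, (hw.fun_mul (hu.isClassical.hasDerivAt_t hx ht)).deriv]
    linear_combination Real.exp (-κ * (T - t)) * hpde x hx t ht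
  lateral t ht := by simp [hbdry (0, t) (Or.inr ⟨rfl, ht⟩)]
  terminal x hx := by simp [hbdry (x, T) (Or.inl ⟨hx, rfl⟩)]

/-- `ε * penalty` tends to infinity with `x`, which confines maxima to a compact set; its time
term outweighs the contribution `2εa ≤ 2εA` of `x²` to the equation. -/
def penalty (A T x t : ℝ) : ℝ := 1 + x ^ 2 + (2 * A + 1) * (T - t)

theorem one_add_sq_le_penalty {A T t : ℝ} (x : ℝ) (hA : 0 ≤ A) (ht : t ≤ T) :
    1 + x ^ 2 ≤ penalty A T x t := by
  unfold penalty
  nlinarith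

theorem continuous_penalty (A T : ℝ) : Continuous fun p : ℝ × ℝ => penalty A T p.1 p.2 := by
  unfold penalty
  fun_prop

theorem hasDerivAt_penalty_t (A T x t : ℝ) : HasDerivAt (penalty A T x) (-(2 * A + 1)) t :=
  ((((hasDerivAt_id' t).const_sub T).const_mul _).const_add _).congr_deriv (by ring)

theorem hasDerivAt_penalty_x (A T t y : ℝ) :
    HasDerivAt (fun x => penalty A T x t) (2 * y) y :=
  (((hasDerivAt_pow 2 y).const_add 1).add_const _).congr_deriv (by ring)

noncomputable def doublingProfile (δ r : ℝ) : ℝ := r - r ^ 2 / (2 * δ)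

theorem doublingProfile_le {δ : ℝ} (hδ : 0 < δ) (r : ℝ) : doublingProfile δ r ≤ r := by
  unfold doublingProfile
  have : 0 ≤ r ^ 2 / (2 * δ) := by positivity
  linarith

theorem half_le_doublingProfile {δ r : ℝ} (hr : r ∈ Icc 0 δ) : r / 2 ≤ doublingProfile δ r := by
  unfold doublingProfile
  rcases hr.1.eq_or_lt with rfl | hr₀
  · simp
  have : r ^ 2 / (2 * δ) ≤ r / 2 := by
    rw [div_le_div_iff₀ (by linarith [hr.2]) two_pos]
    nlinarith [hr.1, hr.2]
  linarith

theorem doublingProfile_self {δ : ℝ} (hδ : δ ≠ 0) : doublingProfile δ δ = δ / 2 := by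
  unfold doublingProfile
  field_simp
  ring

theorem hasDerivAt_doublingProfile {δ : ℝ} (hδ : δ ≠ 0) (r : ℝ) :
    HasDerivAt (doublingProfile δ) (1 - r / δ) r :=
  ((hasDerivAt_id' r).sub ((hasDerivAt_pow 2 r).div_const _)).congr_deriv (by field_simp; ring)

def doublingDomain (δ R T : ℝ) : Set (ℝ × ℝ × ℝ) :=
  {p | p.2.1 ≤ p.1 ∧ p.1 ≤ p.2.1 + δ} ∩ (Icc 0 R ×ˢ Icc 0 R ×ˢ Icc 0 T)

theorem isCompact_doublingDomain (δ R T : ℝ) : IsCompact (doublingDomain δ R T) :=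
  (isCompact_Icc.prod (isCompact_Icc.prod isCompact_Icc)).inter_left
    ((isClosed_le continuous_snd.fst continuous_fst).inter
      (isClosed_le continuous_fst (continuous_snd.fst.add continuous_const)))

theorem IsClassical.continuousOn_doublingDomain {T δ R : ℝ} {v : ℝ → ℝ → ℝ}
    (hv : IsClassical T v) :
    ContinuousOn (fun p : ℝ × ℝ × ℝ => v p.1 p.2.2 - v p.2.1 p.2.2) (doublingDomain δ R T) := by
  have hx : MapsTo (fun p : ℝ × ℝ × ℝ => (p.1, p.2.2)) (doublingDomain δ R T)
      (Ici 0 ×ˢ Icc 0 T) := fun p hp => ⟨hp.2.1.1, hp.2.2.2⟩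
  have hy : MapsTo (fun p : ℝ × ℝ × ℝ => (p.2.1, p.2.2)) (doublingDomain δ R T)
      (Ici 0 ×ˢ Icc 0 T) := fun p hp => ⟨hp.2.2.1.1, hp.2.2.2⟩
  exact (hv.continuousOn.comp (by fun_prop) hx).sub (hv.continuousOn.comp (by fun_prop) hy)

theorem hasDerivAt_barrier (c l y : ℝ) :
    HasDerivAt (fun x => c * (1 - Real.exp (-l * x))) (c * l * Real.exp (-l * y)) y :=
  ((((hasDerivAt_id' y).const_mul (-l)).exp.const_sub 1).const_mul c).congr_deriv (by ring)

theorem Dx_barrier (c l : ℝ) :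
    Dx (fun x _ => c * (1 - Real.exp (-l * x))) = fun x _ => c * l * Real.exp (-l * x) := by
  funext x t
  exact (hasDerivAt_barrier c l x).deriv

theorem hasDerivAt_Dx_barrier (c l y : ℝ) :
    HasDerivAt (fun x => c * l * Real.exp (-l * x)) (-(c * l ^ 2 * Real.exp (-l * y))) y :=
  (((hasDerivAt_id' y).const_mul (-l)).exp.const_mul (c * l)).congr_deriv (by ring)

theorem isClassical_barrier (T c l : ℝ) :
    IsClassical T fun x _ => c * (1 - Real.exp (-l * x)) where
  continuousOn := by fun_prop
  differentiableAt_x x _ t _ := (hasDerivAt_barrier c l x).differentiableAt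
  differentiableAt_Dx x _ t _ := by
    rw [Dx_barrier]
    exact (hasDerivAt_Dx_barrier c l x).differentiableAt
  differentiableAt_t _ _ _ _ := differentiableAt_const _

theorem barrier_supersolution {a g : ℝ → ℝ → ℝ} {κ α N l x t : ℝ} (hκ : 0 < κ) (hN : 0 ≤ N)
    (hαl : κ ≤ α * l ^ 2) (ha : α ≤ a x t) (hg : g x t ≤ N) :
    Dt (fun x _ => N / κ * (1 - Real.exp (-l * x))) x t
      + a x t * Dxx (fun x _ => N / κ * (1 - Real.exp (-l * x))) x t
      - κ * (N / κ * (1 - Real.exp (-l * x))) + g x t ≤ 0 := by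
  have hDt : Dt (fun x _ => N / κ * (1 - Real.exp (-l * x))) x t = 0 := deriv_const _ _
  have hDxx : Dxx (fun x _ => N / κ * (1 - Real.exp (-l * x))) x t =
      -(N / κ * l ^ 2 * Real.exp (-l * x)) := by
    rw [Dxx, Dx_barrier]
    exact (hasDerivAt_Dx_barrier _ l x).deriv
  have hN' : N ≤ a x t * l ^ 2 * (N / κ) := calc
    N = κ * (N / κ) := by field_simp
    _ ≤ a x t * l ^ 2 * (N / κ) := mul_le_mul_of_nonneg_right
      (hαl.trans (mul_le_mul_of_nonneg_right ha (sq_nonneg l))) (by positivity)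
  rw [hDt, hDxx, show κ * (N / κ * (1 - Real.exp (-l * x))) = N * (1 - Real.exp (-l * x)) by
    field_simp]
  nlinarith [mul_le_mul_of_nonneg_right hN' (Real.exp_pos (-l * x)).le]

namespace IsDirichletSolution

variable {T κ α A N : ℝ} {a g v : ℝ → ℝ → ℝ}

theorem lt_of_localMax_sub_penalty {ψ : ℝ → ℝ → ℝ} (hv : IsDirichletSolution T κ a g v)
    (hκ : 0 ≤ κ) (ha : ∀ x > 0, ∀ t ∈ Ico 0 T, a x t ∈ Icc 0 A) (hψ : IsClassical T ψ)
    (hsuper : ∀ x > 0, ∀ t ∈ Ico 0 T, Dt ψ x t + a x t * Dxx ψ x t - κ * ψ x t + g x t ≤ 0)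
    {ε x₀ t₀ : ℝ} (hε : 0 < ε) (hx₀ : 0 < x₀) (ht₀ : t₀ ∈ Ico 0 T)
    (hmax : ∀ᶠ x in 𝓝 x₀, ∀ t ∈ Icc t₀ T,
      v x t - ψ x t - ε * penalty A T x t ≤ v x₀ t₀ - ψ x₀ t₀ - ε * penalty A T x₀ t₀) :
    v x₀ t₀ < ψ x₀ t₀ := by
  by_contra! hvψ
  have hdt : Dt v x₀ t₀ - Dt ψ x₀ t₀ + (2 * A + 1) * ε ≤ 0 := by
    refine HasDerivAt.nonpos_of_isMaxOn_Icc (g := fun t => v x₀ t - ψ x₀ t - ε * penalty A T x₀ t)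
      ?_ ht₀.2 hmax.self_of_nhds
    exact ((hv.hasDerivAt_t hx₀ ht₀).sub (hψ.hasDerivAt_t hx₀ ht₀)).sub
      ((hasDerivAt_penalty_t A T x₀ t₀).const_mul ε) |>.congr_deriv (by ring)
  have hdxx : Dxx v x₀ t₀ - Dxx ψ x₀ t₀ - 2 * ε ≤ 0 := by
    refine IsLocalMax.nonpos_of_hasDerivAt_deriv
      (h := fun x => v x t₀ - ψ x t₀ - ε * penalty A T x t₀)
      (h' := fun x => Dx v x t₀ - Dx ψ x t₀ - ε * (2 * x))
      (hmax.mono fun x hx => hx t₀ ⟨le_rfl, ht₀.2.le⟩) ?_ ?_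
    · filter_upwards [Ioi_mem_nhds hx₀] with x hx
      exact ((hv.hasDerivAt_x hx ht₀).sub (hψ.hasDerivAt_x hx ht₀)).sub
        ((hasDerivAt_penalty_x A T t₀ x).const_mul ε)
    · exact ((hv.hasDerivAt_Dx hx₀ ht₀).sub (hψ.hasDerivAt_Dx hx₀ ht₀)).sub
        (((hasDerivAt_id' x₀).const_mul 2).const_mul ε) |>.congr_deriv (by ring)
  obtain ⟨ha₀, haA⟩ := ha x₀ hx₀ t₀ ht₀
  linarith [hv.pde x₀ hx₀ t₀ ht₀, hsuper x₀ hx₀ t₀ ht₀, mul_nonneg ha₀ (neg_nonneg.2 hdxx),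
    mul_le_mul_of_nonneg_left haA hε.le, mul_nonneg hκ (sub_nonneg.2 hvψ)]

theorem sub_le_penalty {ψ : ℝ → ℝ → ℝ} (hv : IsDirichletSolution T κ a g v) (hκ : 0 ≤ κ)
    (hA : 0 ≤ A) (ha : ∀ x > 0, ∀ t ∈ Ico 0 T, a x t ∈ Icc 0 A)
    (hvC : ∃ C, ∀ x ≥ 0, ∀ t ∈ Icc 0 T, v x t ≤ C) (hψ : IsClassical T ψ)
    (hψ0 : ∀ x ≥ 0, ∀ t ∈ Icc 0 T, 0 ≤ ψ x t)
    (hsuper : ∀ x > 0, ∀ t ∈ Ico 0 T, Dt ψ x t + a x t * Dxx ψ x t - κ * ψ x t + g x t ≤ 0)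
    {ε : ℝ} (hε : 0 < ε) :
    ∀ x ≥ 0, ∀ t ∈ Icc 0 T, v x t - ψ x t ≤ ε * penalty A T x t := by
  by_contra! hcon
  obtain ⟨x₁, hx₁, t₁, ht₁, h₁⟩ := hcon
  obtain ⟨C, hC⟩ := hvC
  obtain ⟨R, hR, hRC⟩ := exists_ge_lt_mul_one_add_sq x₁ C hε
  set Φ : ℝ → ℝ → ℝ := fun x t => v x t - ψ x t - ε * penalty A T x t
  have hΦc : ContinuousOn (fun p : ℝ × ℝ => Φ p.1 p.2) (Icc 0 R ×ˢ Icc 0 T) :=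
    ((hv.continuousOn.sub hψ.continuousOn).mono (prod_mono Icc_subset_Ici_self subset_rfl)).sub
      ((continuous_penalty A T).const_smul ε).continuousOn
  obtain ⟨⟨x₀, t₀⟩, ⟨hx₀, ht₀⟩, hmax⟩ := (isCompact_Icc.prod isCompact_Icc).exists_isMaxOn
    ⟨(x₁, t₁), ⟨hx₁, hR⟩, ht₁⟩ hΦc
  have hmax' : ∀ x ∈ Icc 0 R, ∀ t ∈ Icc 0 T, Φ x t ≤ Φ x₀ t₀ := fun x hx t ht =>
    hmax (show (x, t) ∈ Icc 0 R ×ˢ Icc 0 T from ⟨hx, ht⟩)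
  have hpos : 0 < v x₀ t₀ - ψ x₀ t₀ - ε * penalty A T x₀ t₀ :=
    (sub_pos.2 h₁).trans_le (hmax' x₁ ⟨hx₁, hR⟩ t₁ ht₁)
  have hpen : ε * (1 + x₀ ^ 2) ≤ ε * penalty A T x₀ t₀ :=
    mul_le_mul_of_nonneg_left (one_add_sq_le_penalty x₀ hA ht₀.2) hε.le
  have hx₀pos : 0 < x₀ := by
    refine hx₀.1.lt_of_ne fun h => ?_
    subst h
    rw [hv.lateral t₀ ht₀] at hpos
    nlinarith [hψ0 0 le_rfl t₀ ht₀]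
  have ht₀T : t₀ < T := by
    refine ht₀.2.lt_of_ne fun h => ?_
    subst h
    rw [hv.terminal x₀ hx₀.1] at hpos
    nlinarith [hψ0 x₀ hx₀.1 t₀ ht₀]
  have hx₀R : x₀ < R := by
    refine hx₀.2.lt_of_ne fun h => ?_
    subst h
    nlinarith [hψ0 x₀ hx₀.1 t₀ ht₀, hC x₀ hx₀.1 t₀ ht₀]
  refine (hv.lt_of_localMax_sub_penalty hκ ha hψ hsuper hε hx₀pos ⟨ht₀.1, ht₀T⟩ ?_).not_ge
    (by nlinarith)
  filter_upwards [Ioo_mem_nhds hx₀pos hx₀R] with x hx t ht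
  exact hmax' x ⟨hx.1.le, hx.2.le⟩ t ⟨ht₀.1.trans ht.1, ht.2⟩

theorem le_of_supersolution {ψ : ℝ → ℝ → ℝ} (hv : IsDirichletSolution T κ a g v) (hκ : 0 ≤ κ)
    (hA : 0 ≤ A) (ha : ∀ x > 0, ∀ t ∈ Ico 0 T, a x t ∈ Icc 0 A)
    (hvC : ∃ C, ∀ x ≥ 0, ∀ t ∈ Icc 0 T, v x t ≤ C) (hψ : IsClassical T ψ)
    (hψ0 : ∀ x ≥ 0, ∀ t ∈ Icc 0 T, 0 ≤ ψ x t)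
    (hsuper : ∀ x > 0, ∀ t ∈ Ico 0 T, Dt ψ x t + a x t * Dxx ψ x t - κ * ψ x t + g x t ≤ 0) :
    ∀ x ≥ 0, ∀ t ∈ Icc 0 T, v x t ≤ ψ x t := fun x hx t ht =>
  sub_nonpos.1 <| nonpos_of_forall_pos_le_mul fun _ hε =>
    hv.sub_le_penalty hκ hA ha hvC hψ hψ0 hsuper hε x hx t ht

theorem le_barrier {l : ℝ} (hv : IsDirichletSolution T κ a g v) (hκ : 0 < κ) (hA : 0 ≤ A)
    (ha : ∀ x > 0, ∀ t ∈ Ico 0 T, a x t ∈ Icc α A) (hl : 0 ≤ l) (hαl : κ ≤ α * l ^ 2) (hN : 0 ≤ N)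
    (hg : ∀ x > 0, ∀ t ∈ Ico 0 T, g x t ≤ N) (hvC : ∃ C, ∀ x ≥ 0, ∀ t ∈ Icc 0 T, v x t ≤ C) :
    ∀ x ≥ 0, ∀ t ∈ Icc 0 T, v x t ≤ N / κ * (1 - Real.exp (-l * x)) := by
  have hα : 0 < α := pos_of_mul_pos_left (hκ.trans_le hαl) (sq_nonneg l)
  refine hv.le_of_supersolution hκ.le hA (fun x hx t ht => ⟨hα.le.trans (ha x hx t ht).1,
    (ha x hx t ht).2⟩) hvC (isClassical_barrier T _ l) (fun x hx t _ => ?_)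
    fun x hx t ht => barrier_supersolution hκ hN hαl (ha x hx t ht).1 (hg x hx t ht)
  have : Real.exp (-l * x) ≤ 1 := Real.exp_le_one_iff.2 (by nlinarith)
  exact mul_nonneg (by positivity) (by linarith)

theorem abs_le_barrier {l : ℝ} (hv : IsDirichletSolution T κ a g v) (hκ : 0 < κ) (hA : 0 ≤ A)
    (ha : ∀ x > 0, ∀ t ∈ Ico 0 T, a x t ∈ Icc α A) (hl : 0 ≤ l) (hαl : κ ≤ α * l ^ 2) (hN : 0 ≤ N)
    (hg : ∀ x > 0, ∀ t ∈ Ico 0 T, |g x t| ≤ N) (hvC : ∃ C, ∀ x ≥ 0, ∀ t ∈ Icc 0 T, |v x t| ≤ C) :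
    ∀ x ≥ 0, ∀ t ∈ Icc 0 T, |v x t| ≤ N / κ * (1 - Real.exp (-l * x)) := by
  obtain ⟨C, hC⟩ := hvC
  intro x hx t ht
  refine abs_le.2 ⟨neg_le.1 ?_, ?_⟩
  · exact hv.neg.le_barrier hκ hA ha hl hαl hN
      (fun x hx t ht => (neg_le_abs _).trans (hg x hx t ht))
      ⟨C, fun x hx t ht => (neg_le_abs _).trans (hC x hx t ht)⟩ x hx t ht
  · exact hv.le_barrier hκ hA ha hl hαl hN
      (fun x hx t ht => (le_abs_self _).trans (hg x hx t ht))
      ⟨C, fun x hx t ht => (le_abs_self _).trans (hC x hx t ht)⟩ x hx t ht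

theorem lt_of_localMax_doubling {K δ : ℝ} (hv : IsDirichletSolution T κ a g v) (hκ : 0 ≤ κ)
    (hα : 0 ≤ α) (ha : ∀ x > 0, ∀ t ∈ Ico 0 T, a x t ∈ Icc α A)
    (hg : ∀ x > 0, ∀ t ∈ Ico 0 T, |g x t| ≤ N) (hδ : 0 < δ) (hK : 0 ≤ K) (hKN : N * δ ≤ α * K)
    {ε x₀ y₀ t₀ : ℝ} (hε : 0 < ε) (hx₀ : 0 < x₀) (hy₀ : 0 < y₀) (ht₀ : t₀ ∈ Ico 0 T)
    (hmax : ∀ᶠ p : ℝ × ℝ in 𝓝 (x₀, y₀), ∀ t ∈ Icc t₀ T,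
      v p.1 t - v p.2 t - K * doublingProfile δ (p.1 - p.2) - ε * penalty A T p.1 t ≤
        v x₀ t₀ - v y₀ t₀ - K * doublingProfile δ (x₀ - y₀) - ε * penalty A T x₀ t₀) :
    v x₀ t₀ < v y₀ t₀ := by
  by_contra! hvxy
  have hdt : Dt v x₀ t₀ - Dt v y₀ t₀ + (2 * A + 1) * ε ≤ 0 := by
    refine HasDerivAt.nonpos_of_isMaxOn_Icc ?_ ht₀.2 hmax.self_of_nhds
    exact (((hv.hasDerivAt_t hx₀ ht₀).sub (hv.hasDerivAt_t hy₀ ht₀)).sub_const _).sub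
      ((hasDerivAt_penalty_t A T x₀ t₀).const_mul ε) |>.congr_deriv (by ring)
  have hmax_t₀ := hmax.mono fun p hp => hp t₀ ⟨le_rfl, ht₀.2.le⟩
  have hdxx : Dxx v x₀ t₀ + K / δ - 2 * ε ≤ 0 := by
    refine IsLocalMax.nonpos_of_hasDerivAt_deriv
      (h := fun x => v x t₀ - v y₀ t₀ - K * doublingProfile δ (x - y₀) - ε * penalty A T x t₀)
      (h' := fun x => Dx v x t₀ - K * (1 - (x - y₀) / δ) - ε * (2 * x))
      (((continuous_id.prodMk continuous_const).tendsto x₀).eventually hmax_t₀) ?_ ?_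
    · filter_upwards [Ioi_mem_nhds hx₀] with x hx
      exact (((hv.hasDerivAt_x hx ht₀).sub_const _).sub
        ((((hasDerivAt_doublingProfile hδ.ne' _).comp x
          ((hasDerivAt_id' x).sub_const y₀)).const_mul K).congr_deriv (by ring))).sub
        ((hasDerivAt_penalty_x A T t₀ x).const_mul ε)
    · exact ((hv.hasDerivAt_Dx hx₀ ht₀).sub
        (((((hasDerivAt_id' x₀).sub_const y₀).div_const δ).const_sub 1).const_mul K)).sub
        (((hasDerivAt_id' x₀).const_mul 2).const_mul ε) |>.congr_deriv (by ring)
  have hdyy : -Dxx v y₀ t₀ + K / δ ≤ 0 := by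
    refine IsLocalMax.nonpos_of_hasDerivAt_deriv
      (h := fun y => v x₀ t₀ - v y t₀ - K * doublingProfile δ (x₀ - y) - ε * penalty A T x₀ t₀)
      (h' := fun y => -Dx v y t₀ - K * -(1 - (x₀ - y) / δ))
      (((continuous_const.prodMk continuous_id).tendsto y₀).eventually hmax_t₀) ?_ ?_
    · filter_upwards [Ioi_mem_nhds hy₀] with y hy
      exact ((((hv.hasDerivAt_x hy ht₀).const_sub (v x₀ t₀)).sub
        (((hasDerivAt_doublingProfile hδ.ne' _).comp y
          ((hasDerivAt_id' y).const_sub x₀)).const_mul K)).sub_const _).congr_deriv (by ring)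
    · exact ((hv.hasDerivAt_Dx hy₀ ht₀).neg.sub
        (((((hasDerivAt_id' y₀).const_sub x₀).div_const δ).const_sub 1).neg.const_mul K))
        |>.congr_deriv (by ring)
  obtain ⟨hαx, hAx⟩ := ha x₀ hx₀ t₀ ht₀
  have hαy := (ha y₀ hy₀ t₀ ht₀).1
  have hKδ : N ≤ α * (K / δ) := by
    rw [mul_div_assoc', le_div_iff₀ hδ]
    exact hKN
  linarith [hv.pde x₀ hx₀ t₀ ht₀, hv.pde y₀ hy₀ t₀ ht₀,
    mul_nonneg (hα.trans hαx) (neg_nonneg.2 hdxx), mul_nonneg (hα.trans hαy) (neg_nonneg.2 hdyy),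
    mul_le_mul_of_nonneg_right hαx (div_nonneg hK hδ.le),
    mul_le_mul_of_nonneg_right hαy (div_nonneg hK hδ.le),
    mul_le_mul_of_nonneg_left hAx hε.le, mul_nonneg hκ (sub_nonneg.2 hvxy),
    (abs_le.1 (hg x₀ hx₀ t₀ ht₀)).2, (abs_le.1 (hg y₀ hy₀ t₀ ht₀)).1]

theorem interior_of_doubling_pos {B Λ K δ R ε x y t : ℝ} (hv : IsDirichletSolution T κ a g v)
    (hA : 0 ≤ A) (hB : ∀ x ≥ 0, ∀ t ∈ Icc 0 T, |v x t| ≤ B)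
    (hΛ : ∀ x ≥ 0, ∀ t ∈ Icc 0 T, v x t ≤ Λ * x) (hδ : 0 < δ) (hK : 0 ≤ K) (hKB : 4 * B ≤ K * δ)
    (hKΛ : 2 * Λ ≤ K) (hε : 0 < ε) (hRB : 2 * B < ε * (1 + R ^ 2))
    (hyx : y ≤ x) (hxy : x ≤ y + δ) (hx : x ≤ R) (hy : 0 ≤ y) (ht : t ∈ Icc 0 T)
    (hpos : 0 < v x t - v y t - K * doublingProfile δ (x - y) - ε * penalty A T x t) :
    t < T ∧ 0 < y ∧ y < x ∧ x < y + δ ∧ x < R := by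
  have hx₀ : 0 ≤ x := hy.trans hyx
  have hpen : ε * (1 + x ^ 2) ≤ ε * penalty A T x t :=
    mul_le_mul_of_nonneg_left (one_add_sq_le_penalty x hA ht.2) hε.le
  have hpen₀ : 0 < ε * (1 + x ^ 2) := by positivity
  have hr : x - y ∈ Icc 0 δ := ⟨sub_nonneg.2 hyx, by linarith⟩
  have hφ : 0 ≤ K * doublingProfile δ (x - y) :=
    mul_nonneg hK ((div_nonneg hr.1 two_pos.le).trans (half_le_doublingProfile hr))
  have hdiff : v x t - v y t ≤ 2 * B := by
    linarith [(abs_le.1 (hB x hx₀ t ht)).2, (abs_le.1 (hB y hy t ht)).1]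
  refine ⟨ht.2.lt_of_ne fun h => ?_, hy.lt_of_ne fun h => ?_, hyx.lt_of_ne fun h => ?_,
    hxy.lt_of_ne fun h => ?_, hx.lt_of_ne fun h => ?_⟩
  · rw [h] at hpos hpen
    rw [hv.terminal x hx₀, hv.terminal y hy] at hpos
    linarith
  · rw [← h, hv.lateral t ht] at hpos
    rw [← h, sub_zero] at hr
    simp only [sub_zero] at hpos
    linarith [mul_le_mul_of_nonneg_left (half_le_doublingProfile hr) hK,
      hΛ x hx₀ t ht, mul_le_mul_of_nonneg_right hKΛ hx₀]
  · rw [h, sub_self, sub_self, show doublingProfile δ 0 = 0 by simp [doublingProfile]] at hpos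
    linarith
  · rw [show x - y = δ by linarith, doublingProfile_self hδ.ne'] at hpos
    nlinarith
  · subst h
    linarith

theorem sub_le_doubling_penalty {B Λ K δ : ℝ} (hv : IsDirichletSolution T κ a g v) (hκ : 0 ≤ κ)
    (hA : 0 ≤ A) (hα : 0 ≤ α) (ha : ∀ x > 0, ∀ t ∈ Ico 0 T, a x t ∈ Icc α A)
    (hg : ∀ x > 0, ∀ t ∈ Ico 0 T, |g x t| ≤ N)
    (hB : ∀ x ≥ 0, ∀ t ∈ Icc 0 T, |v x t| ≤ B) (hΛ : ∀ x ≥ 0, ∀ t ∈ Icc 0 T, v x t ≤ Λ * x)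
    (hδ : 0 < δ) (hKN : N * δ ≤ α * K) (hKB : 4 * B ≤ K * δ) (hKΛ : 2 * Λ ≤ K)
    {ε : ℝ} (hε : 0 < ε) :
    ∀ t ∈ Icc 0 T, ∀ y ≥ 0, ∀ x ∈ Icc y (y + δ),
      v x t - v y t - K * doublingProfile δ (x - y) ≤ ε * penalty A T x t := by
  by_contra! hcon
  obtain ⟨t₁, ht₁, y₁, hy₁, x₁, hx₁, h₁⟩ := hcon
  have hK : 0 ≤ K := by
    have := (abs_nonneg _).trans (hB 0 le_rfl t₁ ht₁)
    nlinarith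
  obtain ⟨R, hR, hRB⟩ := exists_ge_lt_mul_one_add_sq x₁ (2 * B) hε
  set G : ℝ → ℝ → ℝ → ℝ := fun x y t =>
    v x t - v y t - K * doublingProfile δ (x - y) - ε * penalty A T x t
  have hGc : ContinuousOn (fun p : ℝ × ℝ × ℝ => G p.1 p.2.1 p.2.2) (doublingDomain δ R T) := by
    refine (hv.continuousOn_doublingDomain.sub ?_).sub ?_
    · unfold doublingProfile
      fun_prop
    · exact ((continuous_penalty A T).comp (by fun_prop : Continuous fun p : ℝ × ℝ × ℝ =>
        (p.1, p.2.2))).continuousOn.const_smul ε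
  have hmem₁ : (x₁, y₁, t₁) ∈ doublingDomain δ R T :=
    ⟨⟨hx₁.1, hx₁.2⟩, ⟨hy₁.trans hx₁.1, hR⟩, ⟨hy₁, hx₁.1.trans hR⟩, ht₁⟩
  obtain ⟨⟨x₀, y₀, t₀⟩, ⟨⟨hyx₀, hxy₀⟩, hx₀, hy₀, ht₀⟩, hmax⟩ :=
    (isCompact_doublingDomain δ R T).exists_isMaxOn ⟨_, hmem₁⟩ hGc
  dsimp only at hyx₀ hxy₀ hx₀ hy₀ ht₀
  have hpos : 0 < v x₀ t₀ - v y₀ t₀ - K * doublingProfile δ (x₀ - y₀) - ε * penalty A T x₀ t₀ :=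
    (sub_pos.2 h₁).trans_le (hmax hmem₁)
  obtain ⟨ht₀T, hy₀pos, hyx, hxδ, hxR⟩ := hv.interior_of_doubling_pos hA hB hΛ hδ hK hKB hKΛ hε
    hRB hyx₀ hxy₀ hx₀.2 hy₀.1 ht₀ hpos
  have hvxy : v y₀ t₀ ≤ v x₀ t₀ := by
    have hr : x₀ - y₀ ∈ Icc 0 δ := ⟨sub_nonneg.2 hyx₀, by linarith⟩
    have : 0 ≤ ε * penalty A T x₀ t₀ :=
      mul_nonneg hε.le ((by positivity : (0:ℝ) ≤ 1 + x₀ ^ 2).trans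
        (one_add_sq_le_penalty x₀ hA ht₀.2))
    nlinarith [mul_le_mul_of_nonneg_left (half_le_doublingProfile hr) hK]
  refine (hv.lt_of_localMax_doubling hκ hα ha hg hδ hK hKN hε (hy₀pos.trans hyx) hy₀pos
    ⟨ht₀.1, ht₀T⟩ ?_).not_ge hvxy
  have hU : {p : ℝ × ℝ | 0 < p.2 ∧ p.2 < p.1 ∧ p.1 < p.2 + δ ∧ p.1 < R} ∈ 𝓝 (x₀, y₀) :=
    IsOpen.mem_nhds ((isOpen_lt continuous_const continuous_snd).inter
      ((isOpen_lt continuous_snd continuous_fst).inter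
        ((isOpen_lt continuous_fst (continuous_snd.add continuous_const)).inter
          (isOpen_lt continuous_fst continuous_const)))) ⟨hy₀pos, hyx, hxδ, hxR⟩
  filter_upwards [hU] with p hp t ht
  exact hmax (show (p.1, p.2, t) ∈ doublingDomain δ R T from ⟨⟨hp.2.1.le, hp.2.2.1.le⟩,
    ⟨hp.1.trans hp.2.1 |>.le, hp.2.2.2.le⟩, ⟨hp.1.le, by linarith [hp.2.1, hp.2.2.2]⟩,
    ⟨ht₀.1.trans ht.1, ht.2⟩⟩)

theorem sub_le_doubling {B Λ K δ : ℝ} (hv : IsDirichletSolution T κ a g v) (hκ : 0 ≤ κ)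
    (hA : 0 ≤ A) (hα : 0 ≤ α) (ha : ∀ x > 0, ∀ t ∈ Ico 0 T, a x t ∈ Icc α A)
    (hg : ∀ x > 0, ∀ t ∈ Ico 0 T, |g x t| ≤ N)
    (hB : ∀ x ≥ 0, ∀ t ∈ Icc 0 T, |v x t| ≤ B) (hΛ : ∀ x ≥ 0, ∀ t ∈ Icc 0 T, v x t ≤ Λ * x)
    (hδ : 0 < δ) (hKN : N * δ ≤ α * K) (hKB : 4 * B ≤ K * δ) (hKΛ : 2 * Λ ≤ K) :
    ∀ t ∈ Icc 0 T, ∀ y ≥ 0, ∀ x ∈ Icc y (y + δ),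
      v x t - v y t ≤ K * doublingProfile δ (x - y) := fun t ht y hy x hx =>
  sub_nonpos.1 <| nonpos_of_forall_pos_le_mul fun _ hε =>
    hv.sub_le_doubling_penalty hκ hA hα ha hg hB hΛ hδ hKN hKB hKΛ hε t ht y hy x hx

theorem abs_Dx_le {B Λ K δ : ℝ} (hv : IsDirichletSolution T κ a g v) (hκ : 0 ≤ κ)
    (hA : 0 ≤ A) (hα : 0 ≤ α) (ha : ∀ x > 0, ∀ t ∈ Ico 0 T, a x t ∈ Icc α A)
    (hg : ∀ x > 0, ∀ t ∈ Ico 0 T, |g x t| ≤ N)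
    (hB : ∀ x ≥ 0, ∀ t ∈ Icc 0 T, |v x t| ≤ B) (hΛ : ∀ x ≥ 0, ∀ t ∈ Icc 0 T, |v x t| ≤ Λ * x)
    (hδ : 0 < δ) (hKN : N * δ ≤ α * K) (hKB : 4 * B ≤ K * δ) (hKΛ : 2 * Λ ≤ K) :
    ∀ x > 0, ∀ t ∈ Ico 0 T, |Dx v x t| ≤ K := by
  intro x hx t ht
  have hK : 0 ≤ K := by
    have := (abs_nonneg _).trans (hB 0 le_rfl t ⟨ht.1, ht.2.le⟩)
    nlinarith
  refine abs_deriv_le_of_abs_sub_le hδ hx fun y hy z hz => abs_le.2 ⟨?_, ?_⟩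
  · have := hv.neg.sub_le_doubling hκ hA hα ha (fun x hx t ht => (abs_neg (g x t)).le.trans
      (hg x hx t ht)) (fun x hx t ht => (abs_neg (v x t)).le.trans (hB x hx t ht))
      (fun x hx t ht => (neg_le_abs _).trans (hΛ x hx t ht)) hδ hKN hKB hKΛ t ⟨ht.1, ht.2.le⟩
      y hy z hz
    nlinarith [mul_le_mul_of_nonneg_left (doublingProfile_le hδ (z - y)) hK]
  · have := hv.sub_le_doubling hκ hA hα ha hg hB
      (fun x hx t ht => (le_abs_self _).trans (hΛ x hx t ht)) hδ hKN hKB hKΛ t ⟨ht.1, ht.2.le⟩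
      y hy z hz
    nlinarith [mul_le_mul_of_nonneg_left (doublingProfile_le hδ (z - y)) hK]

theorem abs_le_and_abs_Dx_le (hv : IsDirichletSolution T κ a g v) (hκ : 0 < κ) (hα : 0 < α)
    (hA : 0 ≤ A) (ha : ∀ x > 0, ∀ t ∈ Ico 0 T, a x t ∈ Icc α A) (hN : 0 ≤ N)
    (hg : ∀ x > 0, ∀ t ∈ Ico 0 T, |g x t| ≤ N) (hvC : ∃ C, ∀ x ≥ 0, ∀ t ∈ Icc 0 T, |v x t| ≤ C) :
    (∀ x ≥ 0, ∀ t ∈ Icc 0 T, |v x t| ≤ N / κ) ∧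
      ∀ x > 0, ∀ t ∈ Ico 0 T, |Dx v x t| ≤ (1 / α + 4 + 2 / √α) * N / √κ := by
  obtain ⟨s, hs, rfl⟩ : ∃ s > 0, s ^ 2 = κ := ⟨√κ, by positivity, Real.sq_sqrt hκ.le⟩
  obtain ⟨r, hr, rfl⟩ : ∃ r > 0, r ^ 2 = α := ⟨√α, by positivity, Real.sq_sqrt hα.le⟩
  rw [Real.sqrt_sq hs.le, Real.sqrt_sq hr.le]
  have hbar := hv.abs_le_barrier hκ hA ha (l := s / r) (by positivity)
    (by rw [div_pow, mul_div_cancel₀ _ (by positivity)]) hN hg hvC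
  have hB : ∀ x ≥ 0, ∀ t ∈ Icc 0 T, |v x t| ≤ N / s ^ 2 := fun x hx t ht => by
    have : 0 ≤ N / s ^ 2 := by positivity
    nlinarith [hbar x hx t ht, Real.exp_pos (-(s / r) * x)]
  have hΛ : ∀ x ≥ 0, ∀ t ∈ Icc 0 T, |v x t| ≤ N / s ^ 2 * (s / r) * x := fun x hx t ht => by
    have : 0 ≤ N / s ^ 2 := by positivity
    nlinarith [hbar x hx t ht, Real.add_one_le_exp (-(s / r) * x)]
  refine ⟨hB, hv.abs_Dx_le hκ.le hA hα.le ha hg hB hΛ (δ := 1 / s) (by positivity) ?_ ?_ ?_⟩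
  · field_simp
    nlinarith
  · field_simp
    nlinarith
  · field_simp
    nlinarith

end IsDirichletSolution

theorem RegC21.weighted_estimate {T κ α A N : ℝ} {a f u : ℝ → ℝ → ℝ} (hu : RegC21 T u)
    (hpde : ∀ x ∈ Ioi (0:ℝ), ∀ t ∈ Ico (0:ℝ) T, Dt u x t + a x t * Dxx u x t + f x t = 0)
    (hbdry : ∀ p ∈ parabBdry T, u p.1 p.2 = 0) (hκ : 0 < κ) (hα : 0 < α) (hA : 0 ≤ A)
    (ha : ∀ x > 0, ∀ t ∈ Ico 0 T, a x t ∈ Icc α A) (hN : 0 ≤ N)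
    (hf : ∀ x > 0, ∀ t ∈ Ico 0 T, Real.exp (-κ * (T - t)) * |f x t| ≤ N)
    (huC : ∃ C, ∀ x ≥ 0, ∀ t ∈ Icc 0 T, |u x t| ≤ C) :
    (∀ x ≥ 0, ∀ t ∈ Icc 0 T, Real.exp (-κ * (T - t)) * |u x t| ≤ N / κ) ∧
      ∀ x > 0, ∀ t ∈ Ico 0 T,
        Real.exp (-κ * (T - t)) * |Dx u x t| ≤ (1 / α + 4 + 2 / √α) * N / √κ := by
  have habs : ∀ (w : ℝ → ℝ → ℝ) x t,
      |Real.exp (-κ * (T - t)) * w x t| = Real.exp (-κ * (T - t)) * |w x t| := fun w x t => by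
    rw [abs_mul, abs_of_pos (Real.exp_pos _)]
  obtain ⟨C, hC⟩ := huC
  have hv := (hu.isDirichletSolution_weighted (κ := κ) hpde hbdry).abs_le_and_abs_Dx_le hκ hα hA ha
    hN (fun x hx t ht => (habs f x t).trans_le (hf x hx t ht)) ⟨C, fun x hx t ht => by
      rw [habs u x t]
      exact (mul_le_of_le_one_left (abs_nonneg _) (exp_neg_mul_sub_le_one hκ.le ht.2)).trans
        (hC x hx t ht)⟩
  refine ⟨fun x hx t ht => (habs u x t).symm.trans_le (hv.1 x hx t ht), fun x hx t ht => ?_⟩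
  simpa only [Dx_mul_time, habs] using hv.2 x hx t ht

theorem CondA1.exists_sq_div_two_mem_Icc {T : ℝ} {σ : ℝ → ℝ → ℝ} (h : CondA1 T σ) :
    ∃ α > 0, ∃ A ≥ 0, ∀ x, ∀ t ∈ Icc 0 T, σ x t ^ 2 / 2 ∈ Icc α A := by
  obtain ⟨⟨C, hC⟩, ⟨m, hm, hmσ⟩, -⟩ := h
  refine ⟨m ^ 2 / 2, by positivity, C ^ 2 / 2, by positivity, fun x t ht => ⟨?_, ?_⟩⟩
  · nlinarith [sq_abs (σ x t), hmσ x t ht]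
  · nlinarith [sq_abs (σ x t), hC x t ht, abs_nonneg (σ x t)]

theorem dirichlet_weighted_norm_estimate_general
    (T : ℝ) (σ : ℝ → ℝ → ℝ)
    (hA1 : CondA1 T σ) :
    ∃ M > 0, ∀ κ > (1:ℝ), ∀ f : ℝ → ℝ → ℝ,
      (∃ C, ∀ x : ℝ, ∀ t ∈ Icc (0:ℝ) T, |f x t| ≤ C) →
      HolderOnCompacts (univ ×ˢ Icc 0 T) f →
      ∀ u : ℝ → ℝ → ℝ,
        RegC21 T u →
        (∀ x ∈ Ioi (0:ℝ), ∀ t ∈ Ico (0:ℝ) T,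
          Dt u x t + σ x t ^ 2 / 2 * Dxx u x t + f x t = 0) →
        (∀ p ∈ parabBdry T, u p.1 p.2 = 0) →
        (∃ C, ∀ x ∈ Ici (0:ℝ), ∀ t ∈ Icc (0:ℝ) T, |u x t| ≤ C) →
        ((∃ C, ∀ x ∈ Ioi (0:ℝ), ∀ t ∈ Ico (0:ℝ) T, |Dx u x t| ≤ C) ∧
          (∀ N : ℝ,
            (∀ x : ℝ, ∀ t ∈ Icc (0:ℝ) T, Real.exp (-κ * (T - t)) * |f x t| ≤ N) →
            ∀ x ∈ Ici (0:ℝ), ∀ t ∈ Ico (0:ℝ) T, ∀ x' ∈ Ioi (0:ℝ), ∀ t' ∈ Ico (0:ℝ) T,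
              Real.exp (-κ * (T - t)) * |u x t| +
                Real.exp (-κ * (T - t')) * |Dx u x' t'| ≤ M / κ ^ ((1:ℝ)/3) * N)) := by
  obtain ⟨α, hα, A, hA, ha⟩ := hA1.exists_sq_div_two_mem_Icc
  set c := 1 / α + 4 + 2 / √α
  refine ⟨1 + c, by positivity, fun κ hκ f ⟨Cf, hCf⟩ _ u hu hpde hbdry hub => ?_⟩
  have hest := fun N (hN : 0 ≤ N)
      (hf : ∀ x > 0, ∀ t ∈ Ico 0 T, Real.exp (-κ * (T - t)) * |f x t| ≤ N) =>
    hu.weighted_estimate hpde hbdry (by linarith) hα hA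
      (fun x _ t ht => ha x t ⟨ht.1, ht.2.le⟩) hN hf hub
  refine ⟨⟨Real.exp (κ * T) * (c * Cf / √κ), fun x hx t ht => ?_⟩,
    fun N hN x hx t ht x' hx' t' ht' => ?_⟩
  · have hCf0 : 0 ≤ Cf := (abs_nonneg _).trans (hCf x t ⟨ht.1, ht.2.le⟩)
    refine le_exp_mul_of_exp_neg_mul_le (by linarith) ht.1 (by positivity)
      ((hest Cf hCf0 fun x _ t ht => ?_).2 x hx t ht)
    exact (mul_le_of_le_one_left (abs_nonneg _)
      (exp_neg_mul_sub_le_one (by linarith) ht.2.le)).trans (hCf x t ⟨ht.1, ht.2.le⟩)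
  · have hN0 : 0 ≤ N :=
      (mul_nonneg (Real.exp_pos _).le (abs_nonneg _)).trans (hN x t ⟨ht.1, ht.2.le⟩)
    obtain ⟨hu', hDx⟩ := hest N hN0 fun x _ t ht => hN x t ⟨ht.1, ht.2.le⟩
    exact (add_le_add (hu' x hx t ⟨ht.1, ht.2.le⟩) (hDx x' hx' t' ht')).trans
      (div_add_mul_div_sqrt_le hκ.le hN0 (by positivity))

/-- Weighted norm estimate `‖u_f‖_κ ≤ (M/κ^{1/3})·‖f‖_κ^{0,ℝ}`: under (A1) and (A4')
there is `M > 0` such that for every `κ > 1`, every bounded source `f` which is Hölder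
continuous on compact subsets of `ℝ×[0,T]`, and every bounded classical solution `u` of
`D_t u + (σ²/2)·D_x² u + f = 0` on `(0,∞)×[0,T)` vanishing on the parabolic boundary,
`D_x u` is bounded and the sum of the weighted sup norms of `u` and `D_x u` is bounded by
`(M/κ^{1/3})·N` for every upper bound `N` of the weighted values of `f`. -/
theorem dirichlet_weighted_norm_estimate
    (T : ℝ) (hT : 0 < T) (σ : ℝ → ℝ → ℝ)
    (hA1 : CondA1 T σ) (hA4 : CondA4' T σ) :
    ∃ M > 0, ∀ κ > (1:ℝ), ∀ f : ℝ → ℝ → ℝ,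
      (∃ C, ∀ x : ℝ, ∀ t ∈ Icc (0:ℝ) T, |f x t| ≤ C) →
      HolderOnCompacts (univ ×ˢ Icc 0 T) f →
      ∀ u : ℝ → ℝ → ℝ,
        RegC21 T u →
        (∀ x ∈ Ioi (0:ℝ), ∀ t ∈ Ico (0:ℝ) T,
          Dt u x t + σ x t ^ 2 / 2 * Dxx u x t + f x t = 0) →
        (∀ p ∈ parabBdry T, u p.1 p.2 = 0) →
        (∃ C, ∀ x ∈ Ici (0:ℝ), ∀ t ∈ Icc (0:ℝ) T, |u x t| ≤ C) →
        ((∃ C, ∀ x ∈ Ioi (0:ℝ), ∀ t ∈ Ico (0:ℝ) T, |Dx u x t| ≤ C) ∧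
          (∀ N : ℝ,
            (∀ x : ℝ, ∀ t ∈ Icc (0:ℝ) T, Real.exp (-κ * (T - t)) * |f x t| ≤ N) →
            ∀ x ∈ Ici (0:ℝ), ∀ t ∈ Ico (0:ℝ) T, ∀ x' ∈ Ioi (0:ℝ), ∀ t' ∈ Ico (0:ℝ) T,
              Real.exp (-κ * (T - t)) * |u x t| +
                Real.exp (-κ * (T - t')) * |Dx u x' t'| ≤ M / κ ^ ((1:ℝ)/3) * N)) :=
  dirichlet_weighted_norm_estimate_general T σ hA1
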